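/- arXiv:2509.11130 — 5 statements merged into one kernel-verified Lean document; each statement's English description precedes it below -/
import Mathlib

section
/- Let (X,T) be a nonautonomous dynamical system (compact metric spaces X_k and continuous maps T_k : X_k → X_{k+1}) that is expansive with expansive constant δ > 0. Then for every 0 < ε < δ and every x ∈ X_0, the diameters of the Bowen balls B_n^T(x,ε) and of the closed Bowen balls tend to 0 as n → ∞. -/
/-!
Expansivity with constant `δ > ε` forces the closed Bowen balls `B̄_n(x, ε)` to shrink to `{x}`:
a point staying `ε`-close to `x` along the whole orbit is never `δ`-separated from it.
These balls form a decreasing sequence of closed subsets of the compact space `X 0`, so they are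
eventually inside every ball around `x`, and their diameters tend to `0`. The open Bowen balls
are contained in the closed ones.
-/

open Filter Metric Topology

section Iterates

variable {X : ℕ → Type*} [∀ k, TopologicalSpace (X k)]

theorem continuous_iterates {T : ∀ k, X k → X (k + 1)} (hT : ∀ k, Continuous (T k))
    {Titer : ∀ j, X 0 → X j} (hT0 : Titer 0 = id)
    (hTs : ∀ j x, Titer (j + 1) x = T j (Titer j x)) (j : ℕ) : Continuous (Titer j) := by
  induction j with
  | zero => exact hT0 ▸ continuous_id
  | succ j ih => exact (funext (hTs j) : Titer (j + 1) = T j ∘ Titer j) ▸ (hT j).comp ih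

end Iterates

theorem tendsto_diam_of_antitone_of_iInter_subset_singleton {α : Type*} [MetricSpace α]
    [CompactSpace α] {C : ℕ → Set α} (hC : Antitone C) (hclosed : ∀ n, IsClosed (C n))
    {x : α} (hx : ⋂ n, C n ⊆ {x}) : Tendsto (fun n => diam (C n)) atTop (𝓝 0) := by
  rw [Metric.tendsto_atTop]
  intro η hη
  obtain ⟨N, hN⟩ := exists_subset_nhds_of_isCompact' hC.directed_ge
    (fun n => (hclosed n).isCompact) hclosed (U := ball x (η / 3))
    (fun y hy => hx hy ▸ ball_mem_nhds x (by positivity))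
  refine ⟨N, fun n hn => ?_⟩
  rw [Real.dist_0_eq_abs, abs_of_nonneg diam_nonneg]
  calc diam (C n) ≤ diam (ball x (η / 3)) := diam_mono ((hC hn).trans hN) isBounded_ball
    _ ≤ 2 * (η / 3) := diam_ball (by positivity)
    _ < η := by linarith

section BowenBall

variable {α : Type*} {Y : ℕ → Type*} [∀ j, MetricSpace (Y j)]

def bowenBall (f : ∀ j, α → Y j) (x : α) (ε : ℝ) (n : ℕ) : Set α :=
  {y | ∀ j < n, dist (f j x) (f j y) < ε}

def closedBowenBall (f : ∀ j, α → Y j) (x : α) (ε : ℝ) (n : ℕ) : Set α :=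
  {y | ∀ j < n, dist (f j x) (f j y) ≤ ε}

variable (f : ∀ j, α → Y j) (x : α) (ε : ℝ)

theorem bowenBall_subset_closedBowenBall (n : ℕ) : bowenBall f x ε n ⊆ closedBowenBall f x ε n :=
  fun _ hy j hj => (hy j hj).le

theorem antitone_closedBowenBall : Antitone (closedBowenBall f x ε) :=
  fun _ _ hmn _ hy j hj => hy j (hj.trans_le hmn)

theorem isClosed_closedBowenBall [TopologicalSpace α] {f : ∀ j, α → Y j}
    (hf : ∀ j, Continuous (f j)) (n : ℕ) : IsClosed (closedBowenBall f x ε n) := by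
  simp only [closedBowenBall, Set.ofPred_forall]
  exact isClosed_iInter fun j => isClosed_iInter fun _ =>
    isClosed_le (continuous_const.dist (hf j)) continuous_const

theorem iInter_closedBowenBall_subset_singleton {f : ∀ j, α → Y j} {δ : ℝ}
    (hexp : ∀ x y : α, x ≠ y → ∃ j, δ < dist (f j x) (f j y)) (hεδ : ε < δ) :
    ⋂ n, closedBowenBall f x ε n ⊆ {x} := by
  intro y hy
  by_contra hyx
  obtain ⟨j, hj⟩ := hexp x y (Ne.symm hyx)
  have := Set.mem_iInter.1 hy (j + 1) j j.lt_succ_self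
  linarith

end BowenBall

theorem stmt9_general (X : ℕ → Type*) [∀ k, MetricSpace (X k)] [∀ k, CompactSpace (X k)]
    (T : ∀ k, X k → X (k + 1)) (hT : ∀ k, Continuous (T k))
    (Titer : ∀ j : ℕ, X 0 → X j) (hT0 : Titer 0 = id)
    (hTs : ∀ j x, Titer (j + 1) x = T j (Titer j x))
    (δ : ℝ)
    (hexp : ∀ x y : X 0, x ≠ y → ∃ j : ℕ, δ < dist (Titer j x) (Titer j y))
    (ε : ℝ) (hεδ : ε < δ) (x : X 0) :
    Tendsto (fun n : ℕ =>
        Metric.diam {y : X 0 | ∀ j < n, dist (Titer j x) (Titer j y) < ε}) atTop (nhds 0) ∧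
    Tendsto (fun n : ℕ =>
        Metric.diam {y : X 0 | ∀ j < n, dist (Titer j x) (Titer j y) ≤ ε}) atTop (nhds 0) := by
  have hclosed : Tendsto (fun n => diam (closedBowenBall Titer x ε n)) atTop (𝓝 0) :=
    tendsto_diam_of_antitone_of_iInter_subset_singleton (antitone_closedBowenBall Titer x ε)
      (isClosed_closedBowenBall x ε (continuous_iterates hT hT0 hTs))
      (iInter_closedBowenBall_subset_singleton x ε hexp hεδ)
  refine ⟨squeeze_zero (fun _ => diam_nonneg) (fun n => ?_) hclosed, hclosed⟩
  exact diam_mono (bowenBall_subset_closedBowenBall Titer x ε n) isBounded_of_compactSpace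

/-- If a nonautonomous dynamical system `(X,T)` on compact metric spaces is expansive with
expansive constant `δ > 0`, then for every `0 < ε < δ` and every `x ∈ X_0`, the diameters of
the Bowen balls `B_n^T(x,ε)` (and of the closed Bowen balls) tend to `0` as `n → ∞`. -/
theorem stmt9 (X : ℕ → Type*) [∀ k, MetricSpace (X k)] [∀ k, CompactSpace (X k)]
    (T : ∀ k, X k → X (k + 1)) (hT : ∀ k, Continuous (T k))
    (Titer : ∀ j : ℕ, X 0 → X j) (hT0 : Titer 0 = id)
    (hTs : ∀ j x, Titer (j + 1) x = T j (Titer j x))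
    (δ : ℝ) (hδ : 0 < δ)
    (hexp : ∀ x y : X 0, x ≠ y → ∃ j : ℕ, δ < dist (Titer j x) (Titer j y))
    (ε : ℝ) (hε0 : 0 < ε) (hεδ : ε < δ) (x : X 0) :
    Tendsto (fun n : ℕ =>
        Metric.diam {y : X 0 | ∀ j < n, dist (Titer j x) (Titer j y) < ε}) atTop (nhds 0) ∧
    Tendsto (fun n : ℕ =>
        Metric.diam {y : X 0 | ∀ j < n, dist (Titer j x) (Titer j y) ≤ ε}) atTop (nhds 0) :=
  stmt9_general X T hT Titer hT0 hTs δ hexp ε hεδ x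
end

section
/- Let (X,T) be an expansive nonautonomous dynamical system with expansive constant δ > 0, and let A = (A_k)_{k≥0} be a sequence of finite covers of X_k with sup_k sup_{A ∈ A_k} diam(A) ≤ δ. Then diam(∨_n^T A) → 0 as n → ∞, where ∨_n^T A is the collection of all sets ∩_{j=0}^{n-1} (T^j)^{-1} A_j with A_j ∈ A_j. -/
/-!
Expansiveness is upgraded to a uniform statement by compactness: the pairs at distance `≥ ε`
form a compact subset of `X₀ × X₀`, covered by the open sets where the `j`-th orbit points are
more than `δ` apart, so finitely many times `j < N` suffice. Two points of a member of the
refinement `∨_n^T A` with `n ≥ N` have `δ`-close orbits up to time `N`, hence are `ε`-close.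
-/

open Metric

section Expansive

variable {Y : Type*} [MetricSpace Y] {X : ℕ → Type*} [∀ j, PseudoMetricSpace (X j)]

def Expansive (f : ∀ j, Y → X j) (δ : ℝ) : Prop :=
  ∀ x y, x ≠ y → ∃ j, δ < dist (f j x) (f j y)

theorem Expansive.exists_dist_lt [CompactSpace Y] {f : ∀ j, Y → X j} {δ : ℝ}
    (hexp : Expansive f δ) (hf : ∀ j, Continuous (f j)) {ε : ℝ} (hε : 0 < ε) :
    ∃ N, ∀ x y, (∀ j < N, dist (f j x) (f j y) ≤ δ) → dist x y < ε := by
  set K : Set (Y × Y) := {p | ε ≤ dist p.1 p.2}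
  have hK : IsCompact K := (isClosed_le continuous_const continuous_dist).isCompact
  have hopen : ∀ j, IsOpen {p : Y × Y | δ < dist (f j p.1) (f j p.2)} := fun j =>
    isOpen_lt continuous_const (((hf j).comp continuous_fst).dist ((hf j).comp continuous_snd))
  have hcover : K ⊆ ⋃ j, {p : Y × Y | δ < dist (f j p.1) (f j p.2)} := fun p hp =>
    Set.mem_iUnion.mpr (hexp p.1 p.2 fun h => hε.not_ge (by simpa [K, h] using hp))
  obtain ⟨t, ht⟩ := hK.elim_finite_subcover _ hopen hcover
  obtain ⟨N, htN⟩ := t.exists_nat_subset_range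
  refine ⟨N, fun x y hxy => not_le.mp fun hle => ?_⟩
  obtain ⟨j, hjt, hj⟩ := Set.mem_iUnion₂.mp (ht (show (x, y) ∈ K from hle))
  exact (hxy j (Finset.mem_range.mp (htN hjt))).not_gt hj

end Expansive

theorem continuous_of_iterate {X : ℕ → Type*} [∀ k, TopologicalSpace (X k)]
    {T : ∀ k, X k → X (k + 1)} (hT : ∀ k, Continuous (T k)) {Titer : ∀ j : ℕ, X 0 → X j}
    (hT0 : Titer 0 = id) (hTs : ∀ j x, Titer (j + 1) x = T j (Titer j x)) :
    ∀ j, Continuous (Titer j)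
  | 0 => hT0 ▸ continuous_id
  | j + 1 => by
    rw [show Titer (j + 1) = T j ∘ Titer j from funext (hTs j)]
    exact (hT j).comp (continuous_of_iterate hT hT0 hTs j)

theorem stmt10_general (X : ℕ → Type*) [∀ k, MetricSpace (X k)] [∀ k, CompactSpace (X k)]
    (T : ∀ k, X k → X (k + 1)) (hT : ∀ k, Continuous (T k))
    (Titer : ∀ j : ℕ, X 0 → X j) (hT0 : Titer 0 = id)
    (hTs : ∀ j x, Titer (j + 1) x = T j (Titer j x))
    (δ : ℝ)
    (hexp : ∀ x y : X 0, x ≠ y → ∃ j : ℕ, δ < dist (Titer j x) (Titer j y))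
    (A : ∀ k, Set (Set (X k)))
    (hAdiam : ∀ k, ∀ a ∈ A k, Metric.diam a ≤ δ) :
    ∀ ε > (0 : ℝ), ∃ N : ℕ, ∀ n ≥ N, ∀ U : ∀ j : ℕ, Set (X j), (∀ j, U j ∈ A j) →
      Metric.diam (⋂ j ∈ Finset.range n, Titer j ⁻¹' U j) ≤ ε := by
  intro ε hε
  obtain ⟨N, hN⟩ :=
    Expansive.exists_dist_lt (f := Titer) hexp (continuous_of_iterate hT hT0 hTs) hε
  refine ⟨N, fun n hn U hU => diam_le_of_forall_dist_le hε.le fun x hx y hy => ?_⟩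
  refine (hN x y fun j hj => ?_).le
  have hjn : j ∈ Finset.range n := Finset.mem_range.mpr (hj.trans_le hn)
  simp only [Set.mem_iInter] at hx hy
  exact (dist_le_diam_of_mem (Bornology.IsBounded.all (U j)) (hx j hjn) (hy j hjn)).trans
    (hAdiam j _ (hU j))

/-- Let `(X,T)` be an expansive NDS with expansive constant `δ > 0`, and `A = (A_k)` a
sequence of finite covers of `X_k` whose members all have diameter `≤ δ`. Then
`diam(∨_n^T A) → 0` as `n → ∞`, i.e. for every `ε > 0` there is `N` such that for all
`n ≥ N` every member `⋂_{j<n} (T^j)⁻¹ A_j` of the dynamical refinement has diameter `≤ ε`. -/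
theorem stmt10 (X : ℕ → Type*) [∀ k, MetricSpace (X k)] [∀ k, CompactSpace (X k)]
    (T : ∀ k, X k → X (k + 1)) (hT : ∀ k, Continuous (T k))
    (Titer : ∀ j : ℕ, X 0 → X j) (hT0 : Titer 0 = id)
    (hTs : ∀ j x, Titer (j + 1) x = T j (Titer j x))
    (δ : ℝ) (hδ : 0 < δ)
    (hexp : ∀ x y : X 0, x ≠ y → ∃ j : ℕ, δ < dist (Titer j x) (Titer j y))
    (A : ∀ k, Set (Set (X k))) (hAfin : ∀ k, (A k).Finite)
    (hAcov : ∀ k, ⋃₀ A k = Set.univ)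
    (hAdiam : ∀ k, ∀ a ∈ A k, Metric.diam a ≤ δ) :
    ∀ ε > (0 : ℝ), ∃ N : ℕ, ∀ n ≥ N, ∀ U : ∀ j : ℕ, Set (X j), (∀ j, U j ∈ A j) →
      Metric.diam (⋂ j ∈ Finset.range n, Titer j ⁻¹' U j) ≤ ε :=
  stmt10_general X T hT Titer hT0 hTs δ hexp A hAdiam
end

section
/- Let (X,T) be a nonautonomous dynamical system and U = (U_k)_{k≥0} a generator for T (a sequence of finite open covers with a common Lebesgue number such that ∩_{j≥0} (T^j)^{-1} cl(U_j) contains at most one point for every choice U_j ∈ U_j). Then the union over n ≥ 0 of the families ∨_n^T U = {∩_{j=0}^{n-1}(T^j)^{-1}U_j : U_j ∈ U_j} is a base for the topology of X_0; in particular, for every ε > 0 there exists N with diam(∨_N^T U) ≤ ε. -/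
/-!
If the refinements `⋂_{j<N} (T^j)⁻¹ U_j` did not shrink uniformly, we could pick for every `N` a
refinement element containing two points at distance `> ε`. Along an ultrafilter on `ℕ` the
chosen cover elements stabilise coordinatewise (each cover is finite) and the pairs of points
converge (`X_0` is compact); continuity of the `T^j` puts both limits in one set
`⋂_j (T^j)⁻¹ cl(U_j)`, which the generator property forces to be a single point. Once diameters
shrink, the refinement elements around a point form a neighbourhood base.
-/

open Filter Topology Set

theorem continuous_of_succ_eq_comp {X : ℕ → Type*} [∀ k, TopologicalSpace (X k)]
    {T : ∀ k, X k → X (k + 1)} (hT : ∀ k, Continuous (T k)) {Φ : ∀ j, X 0 → X j}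
    (h0 : Φ 0 = id) (hsucc : ∀ j x, Φ (j + 1) x = T j (Φ j x)) (j : ℕ) : Continuous (Φ j) := by
  induction j with
  | zero => exact h0 ▸ continuous_id
  | succ j ih => exact (funext (hsucc j)).symm ▸ (hT j).comp ih

theorem Ultrafilter.exists_eventually_eq_of_finite {ι α : Type*} (F : Ultrafilter ι)
    {S : Set α} (hS : S.Finite) {f : ι → α} (hf : ∀ i, f i ∈ S) :
    ∃ a ∈ S, ∀ᶠ i in (F : Filter ι), f i = a :=
  (Ultrafilter.finite_biUnion_mem_iff hS).1 (univ_mem' fun i => mem_biUnion (hf i) rfl)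

section Refinement

variable {X : Type*} {Y : ℕ → Type*} [∀ j, TopologicalSpace (Y j)] {Φ : ∀ j, X → Y j}

theorem mem_iInter_preimage_closure_of_tendsto [TopologicalSpace X] (hΦ : ∀ j, Continuous (Φ j))
    {F : Filter ℕ} [F.NeBot] (hF : F ≤ atTop) {s : ℕ → ∀ j, Set (Y j)} {t : ∀ j, Set (Y j)}
    (hst : ∀ j, ∀ᶠ N in F, s N j = t j) {z : ℕ → X}
    (hz : ∀ N, z N ∈ ⋂ j ∈ Finset.range N, Φ j ⁻¹' s N j) {z₀ : X} (hz₀ : Tendsto z F (𝓝 z₀)) :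
    z₀ ∈ ⋂ j, Φ j ⁻¹' closure (t j) := by
  refine mem_iInter.2 fun j => mem_closure_of_tendsto ((hΦ j).continuousAt.tendsto.comp hz₀) ?_
  filter_upwards [hF (eventually_gt_atTop j), hst j] with N hjN hN
  exact hN ▸ mem_iInter₂.1 (hz N) j (Finset.mem_range.2 hjN)

theorem exists_diam_iInter_preimage_le [PseudoMetricSpace X] [CompactSpace X]
    (hΦ : ∀ j, Continuous (Φ j)) {U : ∀ j, Set (Set (Y j))} (hU : ∀ j, (U j).Finite)
    (hgen : ∀ s : ∀ j, Set (Y j), (∀ j, s j ∈ U j) →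
      (⋂ j, Φ j ⁻¹' closure (s j)).Subsingleton)
    {ε : ℝ} (hε : 0 < ε) :
    ∃ N, ∀ s : ∀ j, Set (Y j), (∀ j, s j ∈ U j) →
      Metric.diam (⋂ j ∈ Finset.range N, Φ j ⁻¹' s j) ≤ ε := by
  by_contra! hlarge
  choose s hsU hdiam using hlarge
  have hfar : ∀ N, ∃ x ∈ ⋂ j ∈ Finset.range N, Φ j ⁻¹' s N j,
      ∃ y ∈ ⋂ j ∈ Finset.range N, Φ j ⁻¹' s N j, ε < dist x y := fun N => by
    by_contra! hclose
    exact (hdiam N).not_ge (Metric.diam_le_of_forall_dist_le hε.le hclose)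
  choose x hx y hy hxy using hfar
  set F := hyperfilter ℕ
  have hF : (F : Filter ℕ) ≤ atTop := Nat.cofinite_eq_atTop ▸ hyperfilter_le_cofinite
  choose t htU hst using fun j => F.exists_eventually_eq_of_finite (hU j) (hsU · j)
  obtain ⟨x₀, -, hx₀⟩ := isCompact_univ.ultrafilter_le_nhds (F.map x) (by simp)
  obtain ⟨y₀, -, hy₀⟩ := isCompact_univ.ultrafilter_le_nhds (F.map y) (by simp)
  have hε_le : ε ≤ dist x₀ y₀ :=
    ge_of_tendsto (Tendsto.dist hx₀ hy₀) (Eventually.of_forall fun N => (hxy N).le)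
  have heq : x₀ = y₀ := hgen t htU
    (mem_iInter_preimage_closure_of_tendsto hΦ hF hst hx hx₀)
    (mem_iInter_preimage_closure_of_tendsto hΦ hF hst hy hy₀)
  rw [heq, dist_self] at hε_le
  exact hε.not_ge hε_le

end Refinement

theorem TopologicalSpace.isTopologicalBasis_of_forall_diam_lt {X : Type*} [PseudoMetricSpace X]
    [CompactSpace X] {B : Set (Set X)} (hopen : ∀ V ∈ B, IsOpen V)
    (hsmall : ∀ x : X, ∀ ε > 0, ∃ V ∈ B, x ∈ V ∧ Metric.diam V < ε) :
    TopologicalSpace.IsTopologicalBasis B := by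
  refine TopologicalSpace.isTopologicalBasis_of_isOpen_of_nhds hopen fun x W hxW hW => ?_
  obtain ⟨ε, hε, hball⟩ := Metric.isOpen_iff.1 hW x hxW
  obtain ⟨V, hVB, hxV, hdiam⟩ := hsmall x ε hε
  exact ⟨V, hVB, hxV, fun y hy =>
    hball ((Metric.dist_le_diam_of_mem Metric.isBounded_of_compactSpace hy hxV).trans_lt hdiam)⟩

theorem stmt11_general (X : ℕ → Type*) [∀ k, MetricSpace (X k)] [∀ k, CompactSpace (X k)]
    (T : ∀ k, X k → X (k + 1)) (hT : ∀ k, Continuous (T k))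
    (Titer : ∀ j : ℕ, X 0 → X j) (hT0 : Titer 0 = id)
    (hTs : ∀ j x, Titer (j + 1) x = T j (Titer j x))
    (U : ∀ k, Set (Set (X k))) (hUfin : ∀ k, (U k).Finite)
    (hUopen : ∀ k, ∀ u ∈ U k, IsOpen u) (hUcov : ∀ k, ⋃₀ U k = Set.univ)
    (hgen : ∀ s : ∀ k, Set (X k), (∀ k, s k ∈ U k) →
      Set.Subsingleton (⋂ j : ℕ, Titer j ⁻¹' closure (s j))) :
    TopologicalSpace.IsTopologicalBasis
        {V : Set (X 0) | ∃ (n : ℕ) (s : ∀ j : ℕ, Set (X j)), (∀ j, s j ∈ U j) ∧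
          V = ⋂ j ∈ Finset.range n, Titer j ⁻¹' s j} ∧
      ∀ ε > (0 : ℝ), ∃ N : ℕ, ∀ s : ∀ j : ℕ, Set (X j), (∀ j, s j ∈ U j) →
        Metric.diam (⋂ j ∈ Finset.range N, Titer j ⁻¹' s j) ≤ ε := by
  have hTiter := continuous_of_succ_eq_comp hT hT0 hTs
  have hshrink := fun ε (hε : 0 < ε) => exists_diam_iInter_preimage_le hTiter hUfin hgen hε
  refine ⟨TopologicalSpace.isTopologicalBasis_of_forall_diam_lt ?_ ?_, hshrink⟩
  · rintro V ⟨n, s, hsU, rfl⟩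
    exact isOpen_biInter_finset fun j _ => (hUopen j (s j) (hsU j)).preimage (hTiter j)
  · intro x ε hε
    obtain ⟨N, hN⟩ := hshrink (ε / 2) (half_pos hε)
    choose s hsU hxs using fun j => mem_sUnion.1 (hUcov j ▸ mem_univ (Titer j x))
    exact ⟨_, ⟨N, s, hsU, rfl⟩, mem_iInter₂.2 fun j _ => hxs j,
      (hN s hsU).trans_lt (half_lt_self hε)⟩

/-- If `U = (U_k)` is a generator for `T` (a sequence of finite open covers with a common
Lebesgue number `δ > 0` such that `⋂_j (T^j)⁻¹ cl(U_j)` contains at most one point for each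
choice `U_j ∈ U_j`), then `⋃_{n≥0} ∨_n^T U` is a base for the topology of `X_0`; in
particular, for every `ε > 0` there exists `N` with `diam(∨_N^T U) ≤ ε`. -/
theorem stmt11 (X : ℕ → Type*) [∀ k, MetricSpace (X k)] [∀ k, CompactSpace (X k)]
    (T : ∀ k, X k → X (k + 1)) (hT : ∀ k, Continuous (T k))
    (Titer : ∀ j : ℕ, X 0 → X j) (hT0 : Titer 0 = id)
    (hTs : ∀ j x, Titer (j + 1) x = T j (Titer j x))
    (U : ∀ k, Set (Set (X k))) (hUfin : ∀ k, (U k).Finite)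
    (hUopen : ∀ k, ∀ u ∈ U k, IsOpen u) (hUcov : ∀ k, ⋃₀ U k = Set.univ)
    (δ : ℝ) (hδ : 0 < δ) (hleb : ∀ k (x : X k), ∃ u ∈ U k, Metric.ball x δ ⊆ u)
    (hgen : ∀ s : ∀ k, Set (X k), (∀ k, s k ∈ U k) →
      Set.Subsingleton (⋂ j : ℕ, Titer j ⁻¹' closure (s j))) :
    TopologicalSpace.IsTopologicalBasis
        {V : Set (X 0) | ∃ (n : ℕ) (s : ∀ j : ℕ, Set (X j)), (∀ j, s j ∈ U j) ∧
          V = ⋂ j ∈ Finset.range n, Titer j ⁻¹' s j} ∧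
      ∀ ε > (0 : ℝ), ∃ N : ℕ, ∀ s : ∀ j : ℕ, Set (X j), (∀ j, s j ∈ U j) →
        Metric.diam (⋂ j ∈ Finset.range N, Titer j ⁻¹' s j) ≤ ε :=
  stmt11_general X T hT Titer hT0 hTs U hUfin hUopen hUcov hgen
end

section
/- If (X,T) is an expansive NDS with expansive constant δ > 0, then for every 0 < ε < δ/4 the sequence of covers B_k = {B(x_i^{(k)}, δ/2)}_{i=1}^{m_k}, where the finite set {x_1^{(k)},…,x_{m_k}^{(k)}} is chosen so that the balls of radius δ/2 - ε cover X_k, is a generator for T with Lebesgue number ε. -/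
/-!
A point within `δ/2 - ε` of a centre `y` has its whole `ε`-ball inside `B(y, δ/2)`, which gives
the Lebesgue number `ε` (and, since `ε > 0`, the covering property). The closure of a `δ/2`-ball has
diameter at most `δ`, so two points whose orbits stay in such closures at every time are never
`δ`-separated, and expansiveness forces them to coincide.
-/

open Metric Set

section Cover

variable {α : Type*} [PseudoMetricSpace α]

lemma sUnion_eq_univ_of_forall_exists_ball_subset {U : Set (Set α)} {ε : ℝ} (hε : 0 < ε)
    (hU : ∀ x, ∃ u ∈ U, ball x ε ⊆ u) : ⋃₀ U = univ :=
  eq_univ_of_forall fun x =>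
    let ⟨_, hu, hxu⟩ := hU x
    mem_sUnion_of_mem (hxu (mem_ball_self hε)) hu

lemma exists_ball_subset_image_ball {c : Set α} {r ε : ℝ}
    (hc : ∀ x, ∃ y ∈ c, dist x y < r - ε) (x : α) :
    ∃ u ∈ (fun y => ball y r) '' c, ball x ε ⊆ u := by
  obtain ⟨y, hy, hxy⟩ := hc x
  exact ⟨_, mem_image_of_mem _ hy, ball_subset_ball' (by linarith)⟩

lemma dist_le_of_mem_closure_ball {p x y : α} {r : ℝ} (hx : x ∈ closure (ball p r))
    (hy : y ∈ closure (ball p r)) : dist x y ≤ 2 * r := by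
  have hxp := mem_closedBall.1 (closure_ball_subset_closedBall hx)
  have hyp := mem_closedBall.1 (closure_ball_subset_closedBall hy)
  linarith [dist_triangle_right x y p]

end Cover

lemma subsingleton_iInter_preimage_of_expansive {X : ℕ → Type*}
    [∀ k, PseudoMetricSpace (X k)] {f : ∀ j, X 0 → X j} {δ : ℝ}
    (hexp : ∀ x y : X 0, x ≠ y → ∃ j, δ < dist (f j x) (f j y)) {s : ∀ j, Set (X j)}
    (hs : ∀ j, ∀ a ∈ s j, ∀ b ∈ s j, dist a b ≤ δ) :
    (⋂ j, f j ⁻¹' s j).Subsingleton := by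
  intro x hx y hy
  by_contra hne
  obtain ⟨j, hj⟩ := hexp x y hne
  exact hj.not_ge (hs j _ (mem_iInter.1 hx j) _ (mem_iInter.1 hy j))

theorem stmt13_general (X : ℕ → Type*) [∀ k, MetricSpace (X k)]
    (Titer : ∀ j : ℕ, X 0 → X j)
    (δ : ℝ)
    (hexp : ∀ x y : X 0, x ≠ y → ∃ j : ℕ, δ < dist (Titer j x) (Titer j y))
    (ε : ℝ) (hε0 : 0 < ε)
    (c : ∀ k, Finset (X k))
    (hc : ∀ k (x : X k), ∃ y ∈ c k, dist x y < δ / 2 - ε) :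
    (∀ k, ((fun y => Metric.ball y (δ / 2)) '' (c k : Set (X k))).Finite ∧
        (∀ u ∈ (fun y => Metric.ball y (δ / 2)) '' (c k : Set (X k)), IsOpen u) ∧
        ⋃₀ ((fun y => Metric.ball y (δ / 2)) '' (c k : Set (X k))) = Set.univ) ∧
      (∀ k (x : X k), ∃ u ∈ (fun y => Metric.ball y (δ / 2)) '' (c k : Set (X k)),
        Metric.ball x ε ⊆ u) ∧
      (∀ s : ∀ k, Set (X k),
        (∀ k, s k ∈ (fun y => Metric.ball y (δ / 2)) '' (c k : Set (X k))) →
        Set.Subsingleton (⋂ j : ℕ, Titer j ⁻¹' closure (s j))) := by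
  have lebesgue k := exists_ball_subset_image_ball (hc k)
  refine ⟨fun k => ⟨(c k).finite_toSet.image _, ?_, ?_⟩, lebesgue, ?_⟩
  · rintro u ⟨y, -, rfl⟩
    exact isOpen_ball
  · exact sUnion_eq_univ_of_forall_exists_ball_subset hε0 (lebesgue k)
  · intro s hs
    refine subsingleton_iInter_preimage_of_expansive hexp fun j a ha b hb => ?_
    obtain ⟨p, -, hp⟩ := hs j
    rw [← hp] at ha hb
    simpa only [mul_div_cancel₀ δ two_ne_zero] using dist_le_of_mem_closure_ball ha hb

/-- If `(X,T)` is an expansive NDS with expansive constant `δ > 0`, then for every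
`0 < ε < δ/4`: whenever for each `k` a finite set `c_k ⊆ X_k` is chosen so that the balls
of radius `δ/2 - ε` centered in `c_k` cover `X_k`, the sequence of covers
`B_k = {B(x, δ/2) : x ∈ c_k}` is a generator for `T` with Lebesgue number `ε`
(each `B_k` is a finite open cover, `ε` is a common Lebesgue number, and each choice of
closures has preimage intersection containing at most one point). -/
theorem stmt13 (X : ℕ → Type*) [∀ k, MetricSpace (X k)] [∀ k, CompactSpace (X k)]
    (T : ∀ k, X k → X (k + 1)) (hT : ∀ k, Continuous (T k))
    (Titer : ∀ j : ℕ, X 0 → X j) (hT0 : Titer 0 = id)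
    (hTs : ∀ j x, Titer (j + 1) x = T j (Titer j x))
    (δ : ℝ) (hδ : 0 < δ)
    (hexp : ∀ x y : X 0, x ≠ y → ∃ j : ℕ, δ < dist (Titer j x) (Titer j y))
    (ε : ℝ) (hε0 : 0 < ε) (hεδ : ε < δ / 4)
    (c : ∀ k, Finset (X k))
    (hc : ∀ k (x : X k), ∃ y ∈ c k, dist x y < δ / 2 - ε) :
    (∀ k, ((fun y => Metric.ball y (δ / 2)) '' (c k : Set (X k))).Finite ∧
        (∀ u ∈ (fun y => Metric.ball y (δ / 2)) '' (c k : Set (X k)), IsOpen u) ∧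
        ⋃₀ ((fun y => Metric.ball y (δ / 2)) '' (c k : Set (X k))) = Set.univ) ∧
      (∀ k (x : X k), ∃ u ∈ (fun y => Metric.ball y (δ / 2)) '' (c k : Set (X k)),
        Metric.ball x ε ⊆ u) ∧
      (∀ s : ∀ k, Set (X k),
        (∀ k, s k ∈ (fun y => Metric.ball y (δ / 2)) '' (c k : Set (X k))) →
        Set.Subsingleton (⋂ j : ℕ, Titer j ⁻¹' closure (s j))) :=
  stmt13_general X Titer δ hexp ε hε0 c hc
end

section
/- (Rank uniformization covering lemma, lower bound form) Let U be a finite disjoint cover of Σ_0^∞(m) by cylinders, with minimal rank n_min and maximal rank n_max. Suppose f = (f_k) is a sequence of functions with f_k(ω) depending only on the first coordinate ω_k. Then for every s ∈ ℝ there exists an integer n* with n_min ≤ n* ≤ n_max such that ∑_{u∈U} exp(-n(u)s + sup_{ω∈[u]} S_{n(u)}^σ f(ω)) ≥ ∑_{u∈Σ_0^{n*}} exp(-n* s + sup_{ω∈[u]} S_{n*}^σ f(ω)), where n(u) is the rank of the cylinder [u] and Σ_0^{n*} denotes all words of length n* starting at index 0. -/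
/-!
Put `g_j(x) = exp (a_{j,x} - s)`. Each term of either sum is the product weight `W(u)` of a word
`u` for these weights, and the words of length `n` have total weight
`Z_n = ∏_{j<n} ∑_x g_j(x)`. Every word of length `N = n_max` extends exactly one `w_i`, and the
extensions of `w_i` have total weight `W(w_i) Z_N / Z_{|w_i|}`; so the numbers
`W(w_i) / Z_{|w_i|}` sum to `1`, and `∑_i W(w_i)` is an average of the values `Z_{|w_i|}`. It is
therefore at least `Z_{n*}` for a minimiser `n*` of `Z` on `[n_min, n_max]`.
-/

open Finset Function

namespace NonautonomousShift

variable {α : ℕ → Type*}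

def cylinder {n : ℕ} (u : ∀ j : Fin n, α j) : Set (∀ j, α j) :=
  {ω | ∀ j : Fin n, ω j = u j}

def weight (g : ∀ j, α j → ℝ) {n : ℕ} (u : ∀ j : Fin n, α j) : ℝ :=
  ∏ j : Fin n, g j (u j)

theorem weight_exp_sub (a : ∀ k, α k → ℝ) (s : ℝ) {n : ℕ} (u : ∀ j : Fin n, α j) :
    weight (fun j x => Real.exp (a j x - s)) u =
      Real.exp (-(n : ℝ) * s + ∑ j : Fin n, a j (u j)) := by
  rw [weight, ← Real.exp_sum, sum_sub_distrib, sum_const, card_univ, Fintype.card_fin,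
    nsmul_eq_mul]
  ring_nf

section PartitionFunction

variable [∀ j, Fintype (α j)]

def partitionFunction (g : ∀ j, α j → ℝ) (n : ℕ) : ℝ :=
  ∏ j ∈ range n, ∑ x, g j x

theorem partitionFunction_mul_prod_Ico (g : ∀ j, α j → ℝ) {n N : ℕ} (h : n ≤ N) :
    partitionFunction g n * ∏ j ∈ Ico n N, ∑ x, g j x = partitionFunction g N :=
  prod_range_mul_prod_Ico _ h

theorem sum_weight (g : ∀ j, α j → ℝ) (N : ℕ) :
    ∑ v : ∀ j : Fin N, α j, weight g v = partitionFunction g N := by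
  simp only [weight]
  rw [← Fintype.prod_sum, partitionFunction,
    ← Fin.prod_univ_eq_prod_range (fun j => ∑ x, g j x)]

end PartitionFunction

variable [∀ j, Nonempty (α j)]

/-- A finite word padded with arbitrary letters; `extendWord v ∈ cylinder u` says that `u` is a
prefix of `v`. -/
noncomputable def extendWord {N : ℕ} (v : ∀ j : Fin N, α j) : ∀ j, α j :=
  fun j => if h : j < N then v ⟨j, h⟩ else Classical.arbitrary _

theorem extendWord_val {N : ℕ} (v : ∀ j : Fin N, α j) (j : Fin N) :
    extendWord v j = v j := by
  simp [extendWord]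

theorem extendWord_mem_cylinder {n : ℕ} (u : ∀ j : Fin n, α j) :
    extendWord u ∈ cylinder u :=
  extendWord_val u

theorem extendWord_mem_cylinder_iff {n N : ℕ} (h : n ≤ N)
    (u : ∀ j : Fin n, α j) (v : ∀ j : Fin N, α j) :
    extendWord v ∈ cylinder u ↔ ∀ j : Fin n, v (Fin.castLE h j) = u j := by
  refine forall_congr' fun j => ?_
  rw [← extendWord_val v (Fin.castLE h j)]
  rfl

theorem sSup_image_birkhoffSum_cylinder (a : ∀ k, α k → ℝ)
    (f : ∀ k, (∀ i, α (k + i)) → ℝ) (hf : ∀ k ϑ, f k ϑ = a k (ϑ 0)) {n : ℕ}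
    (u : ∀ j : Fin n, α j) :
    sSup ((fun ω : ∀ j, α j => ∑ j ∈ range n, f j fun t => ω (j + t)) '' cylinder u) =
      ∑ j : Fin n, a j (u j) := by
  have hconst : ∀ ω ∈ cylinder u,
      ∑ j ∈ range n, f j (fun t => ω (j + t)) = ∑ j : Fin n, a j (u j) := by
    intro ω hω
    rw [← Fin.sum_univ_eq_sum_range (fun j => f j fun t => ω (j + t))]
    exact Fintype.sum_congr _ _ fun j => (hf _ _).trans (congrArg (a j) (hω j))
  rw [Set.image_congr hconst, Set.Nonempty.image_const ⟨_, extendWord_mem_cylinder u⟩,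
    csSup_singleton]

variable [∀ j, Fintype (α j)]

open scoped Classical in
theorem sum_weight_extendWord_mem_cylinder
    (g : ∀ j, α j → ℝ) {n N : ℕ} (h : n ≤ N) (u : ∀ j : Fin n, α j) :
    ∑ v : ∀ j : Fin N, α j with extendWord v ∈ cylinder u, weight g v =
      weight g u * ∏ j ∈ Ico n N, ∑ x, g j x := by
  let t : ∀ j : Fin N, Finset (α j) := fun j =>
    if hj : (j : ℕ) < n then {u ⟨j, hj⟩} else univ
  let G : ℕ → ℝ := fun j => if hj : j < n then g j (u ⟨j, hj⟩) else ∑ x, g j x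
  have hfilter : ({v | extendWord v ∈ cylinder u} : Finset (∀ j : Fin N, α j)) =
      Fintype.piFinset t := by
    ext v
    simp only [mem_filter, mem_univ, true_and, Fintype.mem_piFinset,
      extendWord_mem_cylinder_iff h, t]
    constructor
    · intro hv j
      split_ifs with hj
      · exact mem_singleton.2 (hv ⟨j, hj⟩)
      · exact mem_univ _
    · intro hv j
      simpa [j.isLt] using hv (Fin.castLE h j)
  have hG : ∀ j : Fin N, ∑ x ∈ t j, g j x = G j := by
    intro j
    simp only [t, G]
    split_ifs <;> simp
  simp only [weight]
  rw [hfilter, ← prod_univ_sum, Fintype.prod_congr _ _ hG, Fin.prod_univ_eq_prod_range G,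
    ← prod_range_mul_prod_Ico G h, ← Fin.prod_univ_eq_prod_range G]
  congr 1
  · exact Fintype.prod_congr _ _ fun j => dif_pos j.isLt
  · exact prod_congr rfl fun j hj => dif_neg (mem_Ico.1 hj).1.not_gt

section Partition

variable {ι : Type*} [Fintype ι] (g : ∀ j, α j → ℝ)
  {w : ι → (n : ℕ) × (∀ j : Fin n, α j)}

theorem sum_weight_mul_prod_Ico_eq_of_partition (hcov : ∀ ω, ∃ i, ω ∈ cylinder (w i).2)
    (hdisj : Pairwise (Disjoint on fun i ↦ cylinder (w i).2)) {N : ℕ}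
    (hN : ∀ i, (w i).1 ≤ N) :
    ∑ i, weight g (w i).2 * ∏ j ∈ Ico (w i).1 N, ∑ x, g j x = partitionFunction g N := by
  classical
  have hunique : ∀ v : ∀ j : Fin N, α j,
      ∑ i, (if extendWord v ∈ cylinder (w i).2 then weight g v else 0) = weight g v := by
    intro v
    obtain ⟨i, hi⟩ := hcov (extendWord v)
    rw [sum_eq_single i (fun i' _ hne => if_neg fun hi' => (hdisj hne).ne_of_mem hi' hi rfl)
      (by simp), if_pos hi]
  rw [← sum_weight, ← Fintype.sum_congr _ _ hunique, sum_comm]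
  refine Fintype.sum_congr _ _ fun i => ?_
  rw [← sum_filter, sum_weight_extendWord_mem_cylinder g (hN i)]

theorem partitionFunction_le_sum_weight_of_partition (hg : ∀ j x, 0 < g j x)
    (hcov : ∀ ω, ∃ i, ω ∈ cylinder (w i).2)
    (hdisj : Pairwise (Disjoint on fun i ↦ cylinder (w i).2)) {n : ℕ}
    (hn : ∀ i, partitionFunction g n ≤ partitionFunction g (w i).1) :
    partitionFunction g n ≤ ∑ i, weight g (w i).2 := by
  have hc : ∀ j, 0 < ∑ x, g j x := fun j => sum_pos (fun x _ => hg j x) univ_nonempty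
  have hW : ∀ i, 0 ≤ weight g (w i).2 := fun i => prod_nonneg fun j _ => (hg _ _).le
  let N := univ.sup fun i => (w i).1
  have hN : ∀ i, (w i).1 ≤ N := fun i => le_sup (f := fun i => (w i).1) (mem_univ i)
  refine le_of_mul_le_mul_right ?_ (prod_pos fun j _ => hc j : 0 < partitionFunction g N)
  calc partitionFunction g n * partitionFunction g N
      = ∑ i, weight g (w i).2 *
          (partitionFunction g n * ∏ j ∈ Ico (w i).1 N, ∑ x, g j x) := by
        rw [← sum_weight_mul_prod_Ico_eq_of_partition g hcov hdisj hN, mul_sum]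
        exact Fintype.sum_congr _ _ fun i => by ring
    _ ≤ ∑ i, weight g (w i).2 *
          (partitionFunction g (w i).1 * ∏ j ∈ Ico (w i).1 N, ∑ x, g j x) := by
        gcongr with i
        exacts [hW i, prod_nonneg fun j _ => (hc j).le, hn i]
    _ = (∑ i, weight g (w i).2) * partitionFunction g N := by
        simp only [partitionFunction_mul_prod_Ico g (hN _), sum_mul]

end Partition

end NonautonomousShift

open NonautonomousShift

/-- Rank uniformization covering lemma (lower bound form): let `{[w_i]}_{i<K}` be a finite
disjoint cover of `Σ_0^∞(m)` by cylinders, with minimal rank `n_min` and maximal rank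
`n_max`, and let `f = (f_k)` be a potential with `f_k(ω) = a_{k,ω_k}` depending only on the
first coordinate. Then for every `s ∈ ℝ` there is `n*` with `n_min ≤ n* ≤ n_max` such that
`∑_i exp(-n(w_i) s + sup_{ω∈[w_i]} S_{n(w_i)}^σ f(ω))
  ≥ ∑_{u ∈ Σ_0^{n*}} exp(-n* s + sup_{ω∈[u]} S_{n*}^σ f(ω))`. -/
theorem stmt16 (m : ℕ → ℕ) (hm : ∀ k, 2 ≤ m k)
    (a : ∀ k : ℕ, Fin (m k) → ℝ)
    (f : ∀ k : ℕ, (∀ i : ℕ, Fin (m (k + i))) → ℝ)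
    (hf : ∀ k ϑ, f k ϑ = a k (ϑ 0))
    (K : ℕ) (hK : 0 < K)
    (w : Fin K → (n : ℕ) × (∀ j : Fin n, Fin (m j)))
    (hcov : ∀ ω : ∀ j : ℕ, Fin (m j), ∃ i : Fin K, ∀ j : Fin (w i).1, ω j = (w i).2 j)
    (hdisj : ∀ i i' : Fin K, i ≠ i' →
      Disjoint {ω : ∀ j : ℕ, Fin (m j) | ∀ j : Fin (w i).1, ω j = (w i).2 j}
        {ω : ∀ j : ℕ, Fin (m j) | ∀ j : Fin (w i').1, ω j = (w i').2 j})
    (s : ℝ) :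
    ∃ nstar : ℕ,
      (Finset.univ.inf' ⟨⟨0, hK⟩, Finset.mem_univ _⟩ fun i : Fin K => (w i).1) ≤ nstar ∧
      nstar ≤ (Finset.univ.sup' ⟨⟨0, hK⟩, Finset.mem_univ _⟩ fun i : Fin K => (w i).1) ∧
      (∑ i : Fin K, Real.exp (-((w i).1 : ℝ) * s +
          sSup ((fun ω : ∀ j : ℕ, Fin (m j) =>
              ∑ j ∈ Finset.range (w i).1, f j (fun t : ℕ => ω (j + t))) ''
            {ω : ∀ j : ℕ, Fin (m j) | ∀ j : Fin (w i).1, ω j = (w i).2 j})))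
        ≥ ∑ u : ∀ j : Fin nstar, Fin (m j), Real.exp (-(nstar : ℝ) * s +
            sSup ((fun ω : ∀ j : ℕ, Fin (m j) =>
                ∑ j ∈ Finset.range nstar, f j (fun t : ℕ => ω (j + t))) ''
              {ω : ∀ j : ℕ, Fin (m j) | ∀ j : Fin nstar, ω j = u j})) := by
  have : ∀ k, Nonempty (Fin (m k)) := fun k => ⟨⟨0, zero_lt_two.trans_le (hm k)⟩⟩
  let g : ∀ j, Fin (m j) → ℝ := fun j x => Real.exp (a j x - s)
  have hterm : ∀ n (u : ∀ j : Fin n, Fin (m j)),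
      Real.exp (-(n : ℝ) * s + sSup ((fun ω : ∀ j : ℕ, Fin (m j) =>
        ∑ j ∈ Finset.range n, f j (fun t : ℕ => ω (j + t))) ''
          {ω | ∀ j : Fin n, ω j = u j})) = weight g u := fun n u => by
    rw [weight_exp_sub, ← sSup_image_birkhoffSum_cylinder a f hf u]
    rfl
  have hrank : ∀ i, (w i).1 ∈ Icc (univ.inf' _ fun i : Fin K => (w i).1)
      (univ.sup' _ fun i : Fin K => (w i).1) :=
    fun i => mem_Icc.2 ⟨inf'_le _ (mem_univ i), le_sup' (fun i => (w i).1) (mem_univ i)⟩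
  obtain ⟨nstar, hmem, hmin⟩ :=
    exists_min_image (Icc _ _) (partitionFunction g) ⟨_, hrank ⟨0, hK⟩⟩
  refine ⟨nstar, (mem_Icc.1 hmem).1, (mem_Icc.1 hmem).2, ?_⟩
  simp only [hterm]
  exact (sum_weight g nstar).trans_le <| partitionFunction_le_sum_weight_of_partition g
    (fun j x => Real.exp_pos _) hcov hdisj fun i => hmin _ (hrank i)
end
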